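/- arXiv:2502.21064 — 4 statements merged into one kernel-verified Lean document; each statement's English description precedes it below -/
import Mathlib

section
/- Let A be an abelian category and U a full additive subcategory of A which is cogenerating (every object embeds into an object of U). Then for any j ≥ 1, every exact sequence 0 → E_{j+1} → E_j → ⋯ → E_1 → E_0 → 0 is Yoneda equivalent (as a j-fold extension of E_0 by E_{j+1}) to an exact sequence 0 → E_{j+1} → U_j → ⋯ → U_2 → X → E_0 → 0 in which U_2, …, U_j all lie in U. -/
open CategoryTheory CategoryTheory.Limits

universe v u

variable (A : Type u) [Category.{v} A] [Abelian A]

/-- An exact sequence `0 → Y → E_n → ⋯ → E_1 → X → 0` with `n` middle terms `E_n, …, E_1`,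
encoded as an `ℕ`-indexed complex with `ob 0 ≅ X`, `ob (n+1) ≅ Y`, zero objects in degrees
above `n+1`, exactness at every position `≥ 1` and an epimorphism at the bottom. -/
structure ExtSeq (n : ℕ) (X Y : A) where
  ob : ℕ → A
  d : ∀ i : ℕ, ob (i + 1) ⟶ ob i
  iso0 : ob 0 ≅ X
  isoTop : ob (n + 1) ≅ Y
  is_zero : ∀ i, n + 1 < i → IsZero (ob i)
  w : ∀ i, d (i + 1) ≫ d i = 0
  ex : ∀ i, (ShortComplex.mk (d (i + 1)) (d i) (w i)).Exact
  epi0 : Epi (d 0)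

variable {A}

/-- A morphism of `n`-extensions inducing the identity on the two end terms. -/
structure ExtSeqHom {n : ℕ} {X Y : A} (s t : ExtSeq A n X Y) where
  φ : ∀ i, s.ob i ⟶ t.ob i
  comm : ∀ i, s.d i ≫ φ i = φ (i + 1) ≫ t.d i
  φ0 : φ 0 = s.iso0.hom ≫ t.iso0.inv
  φTop : φ (n + 1) = s.isoTop.hom ≫ t.isoTop.inv

/-- Yoneda equivalence of `n`-fold extensions: the equivalence relation generated by the
existence of a morphism of extensions fixing the end terms. -/
def YonedaEquiv {n : ℕ} {X Y : A} : ExtSeq A n X Y → ExtSeq A n X Y → Prop :=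
  Relation.EqvGen fun s t => Nonempty (ExtSeqHom s t)

variable (A) in
/-- `extVanish A n X Y` expresses the vanishing of the Yoneda Ext-group `Ext^n_A(X, Y)`:
all `n`-fold extensions of `X` by `Y` are Yoneda equivalent. -/
def extVanish (n : ℕ) (X Y : A) : Prop :=
  ∀ s t : ExtSeq A n X Y, YonedaEquiv s t

variable (A) in
/-- `coresSet 𝒰 j` is the class `𝒰^j(A)` of objects `E` admitting an exact sequence
`0 → E → U^1 → ⋯ → U^j → 0` with all `U^i ∈ 𝒰`. -/
def coresSet (𝒰 : Set A) : ℕ → Set A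
  | 0 => {E | IsZero E}
  | j + 1 => {E | ∃ (V : A) (f : E ⟶ V), V ∈ 𝒰 ∧ Mono f ∧ cokernel f ∈ coresSet 𝒰 j}

variable (A) in
/-- `resSet 𝒰 j` is the class `𝒰_j(A)` of objects `E` admitting an exact sequence
`0 → U_j → ⋯ → U_1 → E → 0` with all `U_i ∈ 𝒰`. -/
def resSet (𝒰 : Set A) : ℕ → Set A
  | 0 => {E | IsZero E}
  | j + 1 => {E | ∃ (V : A) (f : V ⟶ E), V ∈ 𝒰 ∧ Epi f ∧ kernel f ∈ resSet 𝒰 j}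

/-- The extension lies (admissibly) in the subcategory `𝒮`: all its terms and all the
images of its differentials (the splice objects) belong to `𝒮`. -/
def ExtSeq.allIn {n : ℕ} {X Y : A} (s : ExtSeq A n X Y) (𝒮 : Set A) : Prop :=
  (∀ i, i ≤ n + 1 → s.ob i ∈ 𝒮) ∧ ∀ i, 1 ≤ i → i ≤ n → (image (s.d i) : A) ∈ 𝒮

/-- Yoneda equivalence computed inside the subcategory `𝒮`: the equivalence relation
generated by morphisms of extensions between extensions lying in `𝒮`. -/
def YonedaEquivIn (𝒮 : Set A) {n : ℕ} {X Y : A} :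
    ExtSeq A n X Y → ExtSeq A n X Y → Prop :=
  Relation.EqvGen fun s t => s.allIn 𝒮 ∧ t.allIn 𝒮 ∧ Nonempty (ExtSeqHom s t)

variable (A) in
/-- `𝒰` is closed under `d`-extensions in `A`. -/
def DExtClosed (𝒰 : Set A) (d : ℕ) : Prop :=
  ∀ (X Y : A), X ∈ 𝒰 → Y ∈ 𝒰 → ∀ s : ExtSeq A d X Y,
    ∃ t : ExtSeq A d X Y, (∀ i, 1 ≤ i → i ≤ d → t.ob i ∈ 𝒰) ∧ YonedaEquiv s t

/-!
Working from the top down, the term `E_{c+2}` (`2 ≤ c + 2 ≤ j`) is replaced by an object `U`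
of `𝒰` receiving a monomorphism `m : E_{c+2} ⟶ U`, and `E_{c+1}` by the pushout of `m` and
`E_{c+2} ⟶ E_{c+1}`. The pushout square keeps the sequence exact (exactness at `U` uses that
`m` is mono), and `m`, the pushout injection and identities elsewhere form a morphism of
extensions, so each step stays in the same Yoneda class. The next step then replaces the
pushout itself, so after `j - 1` steps all of `E_j, …, E_2` lie in `𝒰`.
-/

open CategoryTheory.Category

namespace CategoryTheory.ShortComplex

lemma exists_exact_of_eqToHom_conj {A₁ A₂ B₁ B₂ C₁ C₂ : A} {eA : A₁ = A₂} {eB : B₂ = B₁}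
    {eB' : B₁ = B₂} {eC : C₂ = C₁} {f : A₂ ⟶ B₂} {g : B₂ ⟶ C₂} {w : f ≫ g = 0}
    (h : (mk f g w).Exact) {f' : A₁ ⟶ B₁} {g' : B₁ ⟶ C₁}
    (hf : f' = eqToHom eA ≫ f ≫ eqToHom eB) (hg : g' = eqToHom eB' ≫ g ≫ eqToHom eC) :
    ∃ w' : f' ≫ g' = 0, (mk f' g' w').Exact := by
  subst eA eB eC hf hg
  exact ⟨by simpa using w, by simpa using h⟩

lemma Exact.comp_mono {X₁ X₂ X₃ X₄ : A} {f : X₁ ⟶ X₂} {g : X₂ ⟶ X₃} {w : f ≫ g = 0}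
    (h : (ShortComplex.mk f g w).Exact) (m : X₃ ⟶ X₄) [Mono m] :
    (ShortComplex.mk f (g ≫ m) (by rw [← assoc, w, zero_comp])).Exact :=
  (exact_iff_of_epi_of_isIso_of_mono
    (S₁ := ShortComplex.mk f g w) (S₂ := ShortComplex.mk f (g ≫ m) (by simp [reassoc_of% w]))
    { τ₁ := 𝟙 _, τ₂ := 𝟙 _, τ₃ := m }).mp h

end CategoryTheory.ShortComplex

section PushoutExactness

open ShortComplex

variable {E₃ E₂ E₁ E₀ E V : A} {d₂ : E₃ ⟶ E₂} {d₁ : E₂ ⟶ E₁} {d₀ : E₁ ⟶ E₀} {d : E₀ ⟶ E}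
  (m : E₂ ⟶ V)

noncomputable def pushoutDescZero (w : d₁ ≫ d₀ = 0) : pushout m d₁ ⟶ E₀ :=
  pushout.desc 0 d₀ (by rw [comp_zero, w])

@[simp]
lemma inl_pushoutDescZero (w : d₁ ≫ d₀ = 0) : pushout.inl m d₁ ≫ pushoutDescZero m w = 0 :=
  pushout.inl_desc ..

@[simp]
lemma inr_pushoutDescZero (w : d₁ ≫ d₀ = 0) : pushout.inr m d₁ ≫ pushoutDescZero m w = d₀ :=
  pushout.inr_desc ..

lemma pushoutDescZero_comp (w : d₁ ≫ d₀ = 0) (w' : d₀ ≫ d = 0) :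
    pushoutDescZero m w ≫ d = 0 := by
  apply pushout.hom_ext
  · rw [← assoc, inl_pushoutDescZero, zero_comp, comp_zero]
  · rw [← assoc, inr_pushoutDescZero, w', comp_zero]

lemma epi_pushoutDescZero (w : d₁ ≫ d₀ = 0) [Epi d₀] : Epi (pushoutDescZero m w) :=
  epi_of_epi_fac (inr_pushoutDescZero m w)

lemma exact_biprod_lift_desc_pushout :
    (ShortComplex.mk (biprod.lift m (-d₁)) (biprod.desc (pushout.inl m d₁) (pushout.inr m d₁))
      (by simp [pushout.condition])).Exact :=
  exact_of_g_is_cokernel _ (IsPushout.of_hasPushout m d₁).isColimitCokernelCofork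

lemma exact_comp_pushout_inl {w : d₂ ≫ d₁ = 0} (hd : (ShortComplex.mk d₂ d₁ w).Exact) :
    (ShortComplex.mk (d₂ ≫ m) (pushout.inl m d₁)
      (by rw [assoc, pushout.condition, reassoc_of% w, zero_comp])).Exact := by
  rw [exact_iff_exact_up_to_refinements]
  intro T a ha
  obtain ⟨T', π, hπ, x, hx⟩ := (exact_biprod_lift_desc_pushout m).exact_up_to_refinements
    (a ≫ biprod.inl) (by simpa using ha)
  have hxm : π ≫ a = x ≫ m := by simpa using hx =≫ biprod.fst
  have hxd : x ≫ d₁ = 0 := by simpa using hx =≫ biprod.snd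
  obtain ⟨T'', π', hπ', y, hy⟩ := hd.exact_up_to_refinements x hxd
  refine ⟨T'', π' ≫ π, epi_comp _ _, y, ?_⟩
  dsimp only at hy ⊢
  rw [assoc, hxm, reassoc_of% hy]

lemma exact_pushout_inl_pushoutDescZero {w : d₁ ≫ d₀ = 0}
    (hd : (ShortComplex.mk d₁ d₀ w).Exact) :
    (ShortComplex.mk (pushout.inl m d₁) (pushoutDescZero m w) (by simp)).Exact := by
  have : Epi (biprod.desc (pushout.inl m d₁) (pushout.inr m d₁)) :=
    (IsPushout.of_hasPushout m d₁).epi_shortComplex_g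
  rw [exact_iff_exact_up_to_refinements]
  intro T a ha
  obtain ⟨T₁, π₁, hπ₁, b, hb⟩ := surjective_up_to_refinements_of_epi
    (biprod.desc (pushout.inl m d₁) (pushout.inr m d₁)) a
  rw [biprod.desc_eq, Preadditive.comp_add] at hb
  have hbd : (b ≫ biprod.snd) ≫ d₀ = 0 := by
    simpa [ha] using (hb =≫ pushoutDescZero m w).symm
  obtain ⟨T₂, π₂, hπ₂, z, hz⟩ := hd.exact_up_to_refinements _ hbd
  refine ⟨T₂, π₂ ≫ π₁, epi_comp _ _, π₂ ≫ b ≫ biprod.fst + z ≫ m, ?_⟩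
  -- the `E₁`-component of `b` is pushed through `d₁`, so it already comes from `V`
  simp only [assoc, hb, Preadditive.comp_add, Preadditive.add_comp]
  rw [reassoc_of% hz, pushout.condition]

lemma exact_pushoutDescZero {w : d₁ ≫ d₀ = 0} {w' : d₀ ≫ d = 0}
    (hd : (ShortComplex.mk d₀ d w').Exact) :
    (ShortComplex.mk (pushoutDescZero m w) d (pushoutDescZero_comp m w w')).Exact := by
  rw [exact_iff_exact_up_to_refinements]
  intro T a ha
  obtain ⟨T', π, hπ, x, hx⟩ := hd.exact_up_to_refinements a ha
  exact ⟨T', π, hπ, x ≫ pushout.inr m d₁, by simpa using hx⟩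

end PushoutExactness

namespace ExtSeq

variable {n : ℕ} {X Y : A} (s : ExtSeq A n X Y) (c : ℕ) {V : A} (m : s.ob (c + 2) ⟶ V)

noncomputable def pushoutOb (i : ℕ) : A :=
  if i = c + 2 then V else if i = c + 1 then pushout m (s.d (c + 1)) else s.ob i

lemma pushoutOb_of_ne {i : ℕ} (h2 : i ≠ c + 2) (h1 : i ≠ c + 1) :
    s.pushoutOb c m i = s.ob i := by
  simp [pushoutOb, h1, h2]

lemma pushoutOb_top : s.pushoutOb c m (c + 2) = V := by
  simp [pushoutOb]

lemma pushoutOb_mid : s.pushoutOb c m (c + 1) = pushout m (s.d (c + 1)) := by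
  simp [pushoutOb]

noncomputable def pushoutD (i : ℕ) : s.pushoutOb c m (i + 1) ⟶ s.pushoutOb c m i :=
  if h2 : i = c + 2 then
    eqToHom (s.pushoutOb_of_ne c m (by omega) (by omega)) ≫ s.d i ≫
      eqToHom (congrArg s.ob h2) ≫ m ≫ eqToHom (by rw [h2, pushoutOb_top])
  else if h1 : i = c + 1 then
    eqToHom (by rw [h1, pushoutOb_top]) ≫ pushout.inl m (s.d (c + 1)) ≫
      eqToHom (by rw [h1, pushoutOb_mid])
  else if h0 : i = c then
    eqToHom (by rw [h0, pushoutOb_mid]) ≫ pushoutDescZero m (s.w c) ≫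
      eqToHom (by rw [h0, pushoutOb_of_ne] <;> omega)
  else
    eqToHom (s.pushoutOb_of_ne c m (by omega) (by omega)) ≫ s.d i ≫
      eqToHom (s.pushoutOb_of_ne c m h2 h1).symm

lemma pushoutD_top : s.pushoutD c m (c + 2) =
    eqToHom (s.pushoutOb_of_ne c m (by omega) (by omega)) ≫ (s.d (c + 2) ≫ m) ≫
      eqToHom (s.pushoutOb_top c m).symm := by
  simp [pushoutD]

lemma pushoutD_mid : s.pushoutD c m (c + 1) =
    eqToHom (s.pushoutOb_top c m) ≫ pushout.inl m (s.d (c + 1)) ≫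
      eqToHom (s.pushoutOb_mid c m).symm := by
  simp [pushoutD]

lemma pushoutD_bot : s.pushoutD c m c =
    eqToHom (s.pushoutOb_mid c m) ≫ pushoutDescZero m (s.w c) ≫
      eqToHom (s.pushoutOb_of_ne c m (by omega) (by omega)).symm := by
  simp [pushoutD]

lemma pushoutD_of_ne {i : ℕ} (h2 : i ≠ c + 2) (h1 : i ≠ c + 1) (h0 : i ≠ c) :
    s.pushoutD c m i =
      eqToHom (s.pushoutOb_of_ne c m (by omega) (by omega)) ≫ s.d i ≫
        eqToHom (s.pushoutOb_of_ne c m h2 h1).symm := by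
  simp [pushoutD, h2, h1, h0]

variable {c} in
lemma exists_exact_pushoutD [Mono m] (i : ℕ) :
    ∃ w, (ShortComplex.mk (s.pushoutD c m (i + 1)) (s.pushoutD c m i) w).Exact := by
  obtain rfl | rfl | rfl | rfl | ⟨h2, h1, h0, h⟩ :
      i = c + 2 ∨ i = c + 1 ∨ i = c ∨ c = i + 1 ∨ (i ≠ c + 2 ∧ i ≠ c + 1 ∧ i ≠ c ∧ c ≠ i + 1) := by
    omega
  · exact ShortComplex.exists_exact_of_eqToHom_conj ((s.ex (c + 2)).comp_mono m)
      (s.pushoutD_of_ne c m (by omega) (by omega) (by omega)) (s.pushoutD_top c m)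
  · exact ShortComplex.exists_exact_of_eqToHom_conj (exact_comp_pushout_inl m (s.ex (c + 1)))
      (s.pushoutD_top c m) (s.pushoutD_mid c m)
  · exact ShortComplex.exists_exact_of_eqToHom_conj
      (exact_pushout_inl_pushoutDescZero m (s.ex i)) (s.pushoutD_mid i m) (s.pushoutD_bot i m)
  · exact ShortComplex.exists_exact_of_eqToHom_conj (exact_pushoutDescZero m (s.ex i))
      (s.pushoutD_bot (i + 1) m) (s.pushoutD_of_ne (i + 1) m (by omega) (by omega) (by omega))
  · exact ShortComplex.exists_exact_of_eqToHom_conj (s.ex i)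
      (s.pushoutD_of_ne c m (by omega) (by omega) (by omega)) (s.pushoutD_of_ne c m h2 h1 h0)

noncomputable def pushoutAlong [Mono m] (hc : c + 2 ≤ n) : ExtSeq A n X Y where
  ob := s.pushoutOb c m
  d := s.pushoutD c m
  iso0 := eqToIso (s.pushoutOb_of_ne c m (by omega) (by omega)) ≪≫ s.iso0
  isoTop := eqToIso (s.pushoutOb_of_ne c m (by omega) (by omega)) ≪≫ s.isoTop
  is_zero i hi := by
    rw [s.pushoutOb_of_ne c m (by omega) (by omega)]
    exact s.is_zero i hi
  w i := (s.exists_exact_pushoutD m i).1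
  ex i := (s.exists_exact_pushoutD m i).2
  epi0 := by
    have := s.epi0
    rcases Nat.eq_zero_or_pos c with rfl | hpos
    · have := epi_pushoutDescZero m (s.w 0)
      rw [pushoutD_bot]
      infer_instance
    · rw [s.pushoutD_of_ne c m (by omega) (by omega) (by omega)]
      infer_instance

noncomputable def toPushoutOb (i : ℕ) : s.ob i ⟶ s.pushoutOb c m i :=
  if h2 : i = c + 2 then
    eqToHom (congrArg s.ob h2) ≫ m ≫ eqToHom (by rw [h2, pushoutOb_top])
  else if h1 : i = c + 1 then
    eqToHom (congrArg s.ob h1) ≫ pushout.inr m (s.d (c + 1)) ≫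
      eqToHom (by rw [h1, pushoutOb_mid])
  else eqToHom (s.pushoutOb_of_ne c m h2 h1).symm

lemma toPushoutOb_top :
    s.toPushoutOb c m (c + 2) = m ≫ eqToHom (s.pushoutOb_top c m).symm := by
  simp [toPushoutOb]

lemma toPushoutOb_mid :
    s.toPushoutOb c m (c + 1) =
      pushout.inr m (s.d (c + 1)) ≫ eqToHom (s.pushoutOb_mid c m).symm := by
  simp [toPushoutOb]

lemma toPushoutOb_of_ne {i : ℕ} (h2 : i ≠ c + 2) (h1 : i ≠ c + 1) :
    s.toPushoutOb c m i = eqToHom (s.pushoutOb_of_ne c m h2 h1).symm := by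
  simp [toPushoutOb, h2, h1]

noncomputable def toPushoutAlong [Mono m] (hc : c + 2 ≤ n) :
    ExtSeqHom s (s.pushoutAlong c m hc) where
  φ := s.toPushoutOb c m
  comm i := by
    change s.d i ≫ s.toPushoutOb c m i = s.toPushoutOb c m (i + 1) ≫ s.pushoutD c m i
    obtain rfl | rfl | rfl | ⟨h2, h1, h0⟩ :
        i = c + 2 ∨ i = c + 1 ∨ i = c ∨ (i ≠ c + 2 ∧ i ≠ c + 1 ∧ i ≠ c) := by
      omega
    · simp [toPushoutOb_top, s.toPushoutOb_of_ne c m (i := c + 3) (by omega) (by omega),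
        pushoutD_top]
    · simp [toPushoutOb_top, toPushoutOb_mid, pushoutD_mid, pushout.condition_assoc]
    · simp [toPushoutOb_mid, s.toPushoutOb_of_ne i m (i := i) (by omega) (by omega),
        pushoutD_bot, reassoc_of% inr_pushoutDescZero m (s.w i)]
    · simp [s.toPushoutOb_of_ne c m h2 h1,
        s.toPushoutOb_of_ne c m (i := i + 1) (by omega) (by omega), s.pushoutD_of_ne c m h2 h1 h0]
  φ0 := by
    change s.toPushoutOb c m 0 = _
    simp [s.toPushoutOb_of_ne c m (i := 0) (by omega) (by omega), pushoutAlong]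
  φTop := by
    change s.toPushoutOb c m (n + 1) = _
    simp [s.toPushoutOb_of_ne c m (i := n + 1) (by omega) (by omega), pushoutAlong]

lemma exists_yonedaEquiv_ob_mem {𝒰 : Set A}
    (hcogen : ∀ X : A, ∃ U ∈ 𝒰, ∃ f : X ⟶ U, Mono f) (hc : c + 2 ≤ n) :
    ∃ t : ExtSeq A n X Y, t.ob (c + 2) ∈ 𝒰 ∧
      (∀ i, i ≠ c + 2 → i ≠ c + 1 → t.ob i = s.ob i) ∧ YonedaEquiv s t := by
  obtain ⟨V, hV, m, hm⟩ := hcogen (s.ob (c + 2))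
  refine ⟨s.pushoutAlong c m hc, ?_, fun i h2 h1 ↦ s.pushoutOb_of_ne c m h2 h1,
    .rel _ _ ⟨s.toPushoutAlong c m hc⟩⟩
  change s.pushoutOb c m (c + 2) ∈ 𝒰
  rwa [pushoutOb_top]

lemma exists_yonedaEquiv_top_ob_mem {𝒰 : Set A}
    (hcogen : ∀ X : A, ∃ U ∈ 𝒰, ∃ f : X ⟶ U, Mono f) (k : ℕ) :
    ∃ t : ExtSeq A n X Y, (∀ i, 2 ≤ i → n + 1 ≤ i + k → i ≤ n → t.ob i ∈ 𝒰) ∧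
      YonedaEquiv s t := by
  induction k generalizing s with
  | zero => exact ⟨s, fun i _ _ _ ↦ by omega, .refl s⟩
  | succ k ih =>
    obtain ⟨t, ht, hst⟩ := ih s
    by_cases hk : k + 2 ≤ n
    · obtain ⟨t', ht'U, ht't, ht'⟩ := t.exists_yonedaEquiv_ob_mem (n - k - 2) hcogen (by omega)
      refine ⟨t', fun i h2 hik hin ↦ ?_, .trans _ _ _ hst ht'⟩
      by_cases hi : i = n - k - 2 + 2
      · exact hi ▸ ht'U
      · exact ht't i hi (by omega) ▸ ht i h2 (by omega) hin
    · exact ⟨t, fun i h2 _ hin ↦ ht i h2 (by omega) hin, hst⟩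

end ExtSeq

theorem replace_terms_by_cogenerating_general
    (A : Type u) [Category.{v} A] [Abelian A]
    (𝒰 : Set A)
    (hcogen : ∀ X : A, ∃ U ∈ 𝒰, ∃ f : X ⟶ U, Mono f)
    (j : ℕ) :
    ∀ (X Y : A) (s : ExtSeq A j X Y),
      ∃ t : ExtSeq A j X Y, (∀ i, 2 ≤ i → i ≤ j → t.ob i ∈ 𝒰) ∧ YonedaEquiv s t := by
  intro X Y s
  obtain ⟨t, ht, hst⟩ := s.exists_yonedaEquiv_top_ob_mem hcogen j
  exact ⟨t, fun i h2 hij ↦ ht i h2 (by omega) hij, hst⟩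

/-- if `𝒰` is cogenerating, then every exact sequence
`0 → E_{j+1} → E_j → ⋯ → E_1 → E_0 → 0` is Yoneda equivalent to one
`0 → E_{j+1} → U_j → ⋯ → U_2 → X → E_0 → 0` with `U_2, …, U_j ∈ 𝒰`. -/
theorem replace_terms_by_cogenerating
    (A : Type u) [Category.{v} A] [Abelian A]
    (𝒰 : Set A)
    (hU0 : ∀ Z : A, IsZero Z → Z ∈ 𝒰)
    (hUadd : ∀ X Y : A, X ∈ 𝒰 → Y ∈ 𝒰 → (X ⊞ Y) ∈ 𝒰)
    (hUiso : ∀ X Y : A, (X ≅ Y) → X ∈ 𝒰 → Y ∈ 𝒰)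
    (hcogen : ∀ X : A, ∃ U ∈ 𝒰, ∃ f : X ⟶ U, Mono f)
    (j : ℕ) (hj : 1 ≤ j) :
    ∀ (X Y : A) (s : ExtSeq A j X Y),
      ∃ t : ExtSeq A j X Y, (∀ i, 2 ≤ i → i ≤ j → t.ob i ∈ 𝒰) ∧ YonedaEquiv s t :=
  replace_terms_by_cogenerating_general A 𝒰 hcogen j
end

section
/- Let M be a d-cluster tilting subcategory of an abelian category A and U a d-torsion class in M. Then U_d(A) = {X ∈ A : there is an exact sequence 0 → U_d → ⋯ → U_1 → X → 0 with U_i ∈ U} is contained in U^d(A) = {X ∈ A : there is an exact sequence 0 → X → V^1 → ⋯ → V^d → 0 with V^i ∈ U}. -/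
open CategoryTheory CategoryTheory.Limits

universe v u

variable (A : Type u) [Category.{v} A] [Abelian A]

variable {A}

lemma coresSet_iso_closed (𝒰 : Set A) :
    ∀ (j : ℕ) (E E' : A), (E ≅ E') → E ∈ coresSet A 𝒰 j → E' ∈ coresSet A 𝒰 j := by
  intro j
  induction j with
  | zero => intro E E' e h; exact h.of_iso e.symm
  | succ j ih =>
    intro E E' e h
    obtain ⟨V, f, hV, hm, hc⟩ := h
    haveI := hm
    exact ⟨V, e.inv ≫ f, hV, inferInstance,
      ih _ _ (cokernelEpiComp e.inv f).symm hc⟩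

/-- if `𝒰` is a `d`-torsion class of a `d`-cluster tilting subcategory `ℳ`
of an abelian category `A`, then `𝒰_d(A) ⊆ 𝒰^d(A)`. -/
theorem d_torsion_resSet_subset_coresSet
    (A : Type u) [Category.{v} A] [Abelian A] (d : ℕ) (hd : 1 ≤ d)
    (ℳ : Set A)
    -- `ℳ` is a `d`-cluster tilting subcategory of `A`:
    (hMiso : ∀ X Y : A, (X ≅ Y) → X ∈ ℳ → Y ∈ ℳ)
    (hcontra : ∀ X : A, ∃ M ∈ ℳ, ∃ f : M ⟶ X, ∀ M' ∈ ℳ, ∀ g : M' ⟶ X, ∃ h : M' ⟶ M, h ≫ f = g)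
    (hcov : ∀ X : A, ∃ M ∈ ℳ, ∃ f : X ⟶ M, ∀ M' ∈ ℳ, ∀ g : X ⟶ M', ∃ h : M ⟶ M', f ≫ h = g)
    (hgen : ∀ X : A, ∃ M ∈ ℳ, ∃ f : M ⟶ X, Epi f)
    (hcogen : ∀ X : A, ∃ M ∈ ℳ, ∃ f : X ⟶ M, Mono f)
    (heq1 : ℳ = {X : A | ∀ i, 0 < i → i < d → ∀ M ∈ ℳ, extVanish A i X M})
    (heq2 : ℳ = {X : A | ∀ i, 0 < i → i < d → ∀ M ∈ ℳ, extVanish A i M X})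
    -- `𝒰` is a `d`-torsion class of `ℳ`:
    (𝒰 : Set A) (hUM : 𝒰 ⊆ ℳ)
    (hU0 : ∀ Z : A, IsZero Z → Z ∈ 𝒰)
    (hUadd : ∀ X Y : A, X ∈ 𝒰 → Y ∈ 𝒰 → (X ⊞ Y) ∈ 𝒰)
    (hUiso : ∀ X Y : A, (X ≅ Y) → X ∈ 𝒰 → Y ∈ 𝒰)
    (hUsummand : ∀ (X Y : A) (r : X ⟶ Y) (ι : Y ⟶ X), ι ≫ r = 𝟙 Y → X ∈ 𝒰 → Y ∈ 𝒰)
    (hUdext : DExtClosed A 𝒰 d)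
    (hUquot : ∀ X ∈ ℳ, ∀ U ∈ 𝒰, ∀ f : X ⟶ U, cokernel f ∈ coresSet A 𝒰 d) :
    resSet A 𝒰 d ⊆ coresSet A 𝒰 d := by
  intro X hX
  obtain ⟨d', rfl⟩ : ∃ d', d = d' + 1 := ⟨d - 1, (Nat.succ_pred_eq_of_pos hd).symm⟩
  obtain ⟨V, f, hV, hepi, hker⟩ := hX
  haveI := hepi
  obtain ⟨W, g, hW, hgepi⟩ : ∃ W, ∃ g : W ⟶ kernel f, W ∈ 𝒰 ∧ Epi g := by
    cases d' with
    | zero => exact ⟨kernel f, 𝟙 _, hU0 _ hker, inferInstance⟩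
    | succ e =>
      obtain ⟨W, g, hW, hgepi, -⟩ := hker
      exact ⟨W, g, hW, hgepi⟩
  haveI := hgepi
  have hc := hUquot W (hUM hW) V hV (g ≫ kernel.ι f)
  have i1 : cokernel (g ≫ kernel.ι f) ≅ cokernel (kernel.ι f) :=
    cokernelEpiComp g (kernel.ι f)
  have hco : IsColimit (CokernelCofork.ofπ f (kernel.condition f)) :=
    Abelian.epiIsCokernelOfKernel (KernelFork.ofι (kernel.ι f) (kernel.condition f))
      (kernelIsKernel f)
  have i2 : cokernel (kernel.ι f) ≅ X :=
    (cokernelIsCokernel (kernel.ι f)).coconePointUniqueUpToIso hco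
  exact coresSet_iso_closed 𝒰 _ _ _ (i1 ≪≫ i2) hc
end

section
/- Let E be a weakly idempotent complete exact category with d-cluster tilting subcategory M. An object P ∈ M is projective with respect to the d-exact structure of M (i.e. Hom(P,−) sends admissible epimorphisms of M to surjections) if and only if P is projective in E (Hom(P,−) sends deflations of E to surjections). -/
open CategoryTheory CategoryTheory.Limits

universe v u v' u'

/-- The data of a class of conflations (kernel–cokernel pairs) on an additive category,
encoded as a class of short complexes. -/
class ExactCatStruct (E : Type u) [Category.{v} E] [Preadditive E] : Type (max u v) where
  conflation : Set (ShortComplex E)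

variable {E : Type u} [Category.{v} E] [Preadditive E]

/-- A morphism is an inflation if it occurs as the first map of a conflation. -/
def Inflation [ExactCatStruct E] {X Y : E} (f : X ⟶ Y) : Prop :=
  ∃ (Z : E) (g : Y ⟶ Z) (w : f ≫ g = 0), ShortComplex.mk f g w ∈ ExactCatStruct.conflation

/-- A morphism is a deflation if it occurs as the second map of a conflation. -/
def Deflation [ExactCatStruct E] {Y Z : E} (g : Y ⟶ Z) : Prop :=
  ∃ (X : E) (f : X ⟶ Y) (w : f ≫ g = 0), ShortComplex.mk f g w ∈ ExactCatStruct.conflation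

/-- The axioms of a Quillen exact category, for a given class of conflations. -/
class IsExactCat (E : Type u) [Category.{v} E] [Preadditive E] [ExactCatStruct E] : Prop where
  iso_closed : ∀ {S T : ShortComplex E}, (S ≅ T) →
    S ∈ ExactCatStruct.conflation (E := E) → T ∈ ExactCatStruct.conflation
  conf_kernel : ∀ S ∈ ExactCatStruct.conflation (E := E),
    Nonempty (IsLimit (KernelFork.ofι S.f S.zero))
  conf_cokernel : ∀ S ∈ ExactCatStruct.conflation (E := E),
    Nonempty (IsColimit (CokernelCofork.ofπ S.g S.zero))
  id_inflation : ∀ X : E, Inflation (𝟙 X)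
  id_deflation : ∀ X : E, Deflation (𝟙 X)
  comp_inflation : ∀ {X Y Z : E} (f : X ⟶ Y) (g : Y ⟶ Z),
    Inflation f → Inflation g → Inflation (f ≫ g)
  comp_deflation : ∀ {X Y Z : E} (f : X ⟶ Y) (g : Y ⟶ Z),
    Deflation f → Deflation g → Deflation (f ≫ g)
  pullback_deflation : ∀ {X Y Z : E} (p : Y ⟶ Z) (f : X ⟶ Z), Deflation p →
    ∃ (W : E) (f' : W ⟶ Y) (p' : W ⟶ X), Deflation p' ∧ IsPullback f' p' p f
  pushout_inflation : ∀ {X Y Z : E} (i : X ⟶ Y) (f : X ⟶ Z), Inflation i →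
    ∃ (W : E) (i' : Z ⟶ W) (g : Y ⟶ W), Inflation i' ∧ IsPushout i f g i'

/-- Weak idempotent completeness: every split epimorphism has a kernel. -/
def WeaklyIdemComplete (E : Type u) [Category.{v} E] [Preadditive E] : Prop :=
  ∀ ⦃X Y : E⦄ (f : X ⟶ Y), IsSplitEpi f → HasKernel f

variable (E) in
/-- An exact (acyclic) sequence `0 → Y → E_n → ⋯ → E_1 → X → 0` in an exact category,
with the factorization of its differentials through conflations as part of the data:
`Z i` is the splice object between `ob (i+1)` and `ob i`. -/
structure EExtSeq [ExactCatStruct E] (n : ℕ) (X Y : E) where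
  ob : ℕ → E
  Z : ℕ → E
  π : ∀ i, ob (i + 1) ⟶ Z i
  ι : ∀ i, Z i ⟶ ob i
  iso0 : ob 0 ≅ X
  isoTop : ob (n + 1) ≅ Y
  ob_zero : ∀ i, n + 1 < i → IsZero (ob i)
  Z_zero : ∀ i, n < i → IsZero (Z i)
  w : ∀ i, ι (i + 1) ≫ π i = 0
  confl : ∀ i, ShortComplex.mk (ι (i + 1)) (π i) (w i) ∈ ExactCatStruct.conflation
  iso_bot : IsIso (ι 0)

/-- The differentials of an acyclic sequence. -/
def EExtSeq.dd [ExactCatStruct E] {n : ℕ} {X Y : E} (s : EExtSeq E n X Y) (i : ℕ) :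
    s.ob (i + 1) ⟶ s.ob i :=
  s.π i ≫ s.ι i

lemma EExtSeq.dd_comp [ExactCatStruct E] {n : ℕ} {X Y : E} (s : EExtSeq E n X Y) (i : ℕ) :
    s.dd (i + 1) ≫ s.dd i = 0 := by
  show (s.π (i + 1) ≫ s.ι (i + 1)) ≫ s.π i ≫ s.ι i = 0
  rw [Category.assoc, ← Category.assoc (s.ι (i + 1)) (s.π i) (s.ι i), s.w i, zero_comp,
    comp_zero]

/-- A morphism of acyclic sequences inducing the identity on the end terms. -/
structure EExtSeqHom [ExactCatStruct E] {n : ℕ} {X Y : E} (s t : EExtSeq E n X Y) where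
  φ : ∀ i, s.ob i ⟶ t.ob i
  comm : ∀ i, s.dd i ≫ φ i = φ (i + 1) ≫ t.dd i
  φ0 : φ 0 = s.iso0.hom ≫ t.iso0.inv
  φTop : φ (n + 1) = s.isoTop.hom ≫ t.isoTop.inv

/-- Yoneda equivalence of `n`-fold extensions in an exact category. -/
def EYonedaEquiv [ExactCatStruct E] {n : ℕ} {X Y : E} :
    EExtSeq E n X Y → EExtSeq E n X Y → Prop :=
  Relation.EqvGen fun s t => Nonempty (EExtSeqHom s t)

variable (E) in
/-- Vanishing of the Yoneda Ext-group `Ext^n_E(X, Y)` of an exact category: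
all `n`-fold extensions of `X` by `Y` are Yoneda equivalent. -/
def eExtVanish [ExactCatStruct E] (n : ℕ) (X Y : E) : Prop :=
  ∀ s t : EExtSeq E n X Y, EYonedaEquiv s t

variable (E) in
/-- `ℳ` is a `d`-cluster tilting subcategory of the exact category `E`. -/
structure IsDCT [ExactCatStruct E] (ℳ : Set E) (d : ℕ) : Prop where
  iso_closed : ∀ X Y : E, (X ≅ Y) → X ∈ ℳ → Y ∈ ℳ
  generating : ∀ X : E, ∃ M ∈ ℳ, ∃ f : M ⟶ X, Deflation f
  cogenerating : ∀ X : E, ∃ M ∈ ℳ, ∃ f : X ⟶ M, Inflation f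
  contravariantly_finite : ∀ X : E, ∃ M ∈ ℳ, ∃ f : M ⟶ X,
    ∀ M' ∈ ℳ, ∀ g : M' ⟶ X, ∃ h : M' ⟶ M, h ≫ f = g
  covariantly_finite : ∀ X : E, ∃ M ∈ ℳ, ∃ f : X ⟶ M,
    ∀ M' ∈ ℳ, ∀ g : X ⟶ M', ∃ h : M ⟶ M', f ≫ h = g
  eq_left_perp : ℳ = {X : E | ∀ i, 0 < i → i < d → ∀ M ∈ ℳ, eExtVanish E i X M}
  eq_right_perp : ℳ = {X : E | ∀ i, 0 < i → i < d → ∀ M ∈ ℳ, eExtVanish E i M X}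

/-- an object `P` of a `d`-cluster tilting subcategory `ℳ` of a weakly
idempotent complete exact category `E` is projective with respect to the `d`-exact
structure of `ℳ` (whose admissible epimorphisms are the deflations of `E` lying in `ℳ`)
if and only if it is projective in `E`. -/
theorem projective_in_dCT_iff_projective
    (E : Type u) [Category.{v} E] [Preadditive E] [HasZeroObject E] [HasBinaryBiproducts E]
    [ExactCatStruct E] [IsExactCat E]
    (hwic : WeaklyIdemComplete E)
    (d : ℕ) (hd : 1 ≤ d) (ℳ : Set E) (hM : IsDCT E ℳ d)
    (P : E) (hP : P ∈ ℳ) :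
    (∀ X Y : E, X ∈ ℳ → Y ∈ ℳ → ∀ f : X ⟶ Y, Deflation f →
      ∀ g : P ⟶ Y, ∃ h : P ⟶ X, h ≫ f = g) ↔
    (∀ X Y : E, ∀ f : X ⟶ Y, Deflation f → ∀ g : P ⟶ Y, ∃ h : P ⟶ X, h ≫ f = g) := by
  constructor
  · intro hproj X Y f hf g
    obtain ⟨W, f', p', hp', hpb⟩ := IsExactCat.pullback_deflation f g hf
    obtain ⟨M, hMmem, q, hq⟩ := hM.generating W
    obtain ⟨h, hh⟩ := hproj M P hMmem hP (q ≫ p')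
      (IsExactCat.comp_deflation q p' hq hp') (𝟙 P)
    refine ⟨h ≫ q ≫ f', ?_⟩
    simp only [Category.assoc, hpb.w, reassoc_of% hh]
  · intro hproj X Y _ _ f hf g
    exact hproj X Y f hf g
end

section
/- Let F be a d-cluster tilting subcategory of a triangulated category T, i.e. F is functorially finite, closed under direct summands, and F = {X ∈ T : Hom(X, F[i]) = 0 for 0 < i < d} = {X ∈ T : Hom(F, X[i]) = 0 for 0 < i < d}. Then F is idempotent complete if and only if T is idempotent complete. -/
/-!
If `T` is idempotent complete, so is `ℱ`, since `ℱ` is closed under summands. Conversely, let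
`ε` be an idempotent of `Z ∈ T`. A right `ℱ`-approximation `f : M ⟶ Z` gives a right
approximation `M ⊞ M ⟶ Z` that intertwines the projection onto the first summand with `ε`;
complete it to a triangle `A ⟶ M ⊞ M ⟶ Z ⟶ A⟦1⟧`. The endomorphisms of that triangle inducing
zero on `M ⊞ M` and `Z` square to zero, so the pair of idempotents lifts to an idempotent
endomorphism `Φ` of the triangle. `Hom(ℱ, A⟦i⟧)` vanishes for one more `i` than `Hom(ℱ, Z⟦i⟧)`,
so after `d - 1` steps we reach `ℱ`, where `Φ.hom₁` splits by assumption. Finally, if the first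
two components of an idempotent endomorphism of a distinguished triangle split, so does the
third: the split components span a distinguished retract whose idempotent differs from `Φ` by a
square-zero endomorphism, hence is conjugate to `Φ`.
-/
open CategoryTheory CategoryTheory.Limits CategoryTheory.Pretriangulated

universe v u

theorem IsIdempotentElem.exists_unit_mul_eq_mul_of_sub_mul_self_eq_zero {R : Type*} [Ring R]
    {e f : R} (he : IsIdempotentElem e) (hf : IsIdempotentElem f)
    (h : (e - f) * (e - f) = 0) : ∃ u : Rˣ, e * u = u * f := by
  have hf' : (f - e) * (f - e) = 0 := by rw [← neg_sub, neg_mul_neg, h]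
  -- `u = e f + (1 - e)(1 - f)` and `v = f e + (1 - f)(1 - e)` satisfy `u v = 1 - (e - f)²`
  have huv : ∀ a b : R, (a * b + (1 - a) * (1 - b)) * (b * a + (1 - b) * (1 - a)) =
      1 - (a - b) * (a - b) + 2 * (a * a - a) + 2 * (b * b - b) - 2 * (b * b - b) * a
        - 2 * a * (b * b - b) + 4 * a * (b * b - b) * a := by
    intro a b
    noncomm_ring
  have hconj : e * (e * f + (1 - e) * (1 - f)) = (e * f + (1 - e) * (1 - f)) * f
      + (f * f - f) - (e * e - e) + 2 * (e * e - e) * f - 2 * e * (f * f - f) := by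
    noncomm_ring
  refine ⟨⟨e * f + (1 - e) * (1 - f), f * e + (1 - f) * (1 - e), ?_, ?_⟩, ?_⟩
  · simp [huv, he.eq, hf.eq, h]
  · simp [huv, he.eq, hf.eq, hf']
  · simp [hconj, he.eq, hf.eq]

namespace CategoryTheory

variable {C D : Type*} [Category C] [Category D]

def IsSplitIdempotent {X : C} (e : X ⟶ X) : Prop :=
  ∃ (Y : C) (i : Y ⟶ X) (r : X ⟶ Y), i ≫ r = 𝟙 Y ∧ r ≫ i = e

lemma isIdempotentComplete_iff_forall_isSplitIdempotent :
    IsIdempotentComplete C ↔ ∀ (X : C) (e : X ⟶ X), e ≫ e = e → IsSplitIdempotent e :=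
  ⟨fun h => h.idempotents_split, fun h => ⟨h⟩⟩

namespace IsSplitIdempotent

variable {X : C} {e f : X ⟶ X}

lemma comp_self (h : IsSplitIdempotent e) : e ≫ e = e := by
  obtain ⟨Y, i, r, hir, rfl⟩ := h
  rw [Category.assoc, reassoc_of% hir]

lemma map (h : IsSplitIdempotent e) (F : C ⥤ D) : IsSplitIdempotent (F.map e) := by
  obtain ⟨Y, i, r, hir, rfl⟩ := h
  exact ⟨F.obj Y, F.map i, F.map r, by rw [← F.map_comp, hir, F.map_id], (F.map_comp r i).symm⟩

lemma of_conj (h : IsSplitIdempotent e) (u : X ≅ X) (hu : f ≫ u.hom = u.hom ≫ e) :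
    IsSplitIdempotent f := by
  obtain ⟨Y, i, r, hir, rfl⟩ := h
  refine ⟨Y, i ≫ u.inv, u.hom ≫ r, by simp [hir], ?_⟩
  rw [Category.assoc, reassoc_of% hu.symm, u.hom_inv_id, Category.comp_id]

lemma of_sub_comp_self_eq_zero [Preadditive C] (h : IsSplitIdempotent e) (hf : f ≫ f = f)
    (hef : (e - f) ≫ (e - f) = 0) : IsSplitIdempotent f := by
  obtain ⟨u, hu⟩ := IsIdempotentElem.exists_unit_mul_eq_mul_of_sub_mul_self_eq_zero
    (R := End X) h.comp_self hf hef
  exact h.of_conj (Aut.unitsEndEquivAut X u) hu.symm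

end IsSplitIdempotent

end CategoryTheory

namespace CategoryTheory.Limits

variable {C : Type*} [Category C] [Preadditive C] [HasBinaryBiproducts C]

lemma biprod.desc_comp_idempotent {M Z : C} (f : M ⟶ Z) {ε : Z ⟶ Z} (hε : ε ≫ ε = ε) :
    biprod.desc (f ≫ ε) (f ≫ (𝟙 Z - ε)) ≫ ε =
      (biprod.fst ≫ biprod.inl) ≫ biprod.desc (f ≫ ε) (f ≫ (𝟙 Z - ε)) := by
  ext <;> simp [hε]

lemma biprod.lift_id_id_comp_desc {M Z : C} (f : M ⟶ Z) (ε : Z ⟶ Z) :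
    biprod.lift (𝟙 M) (𝟙 M) ≫ biprod.desc (f ≫ ε) (f ≫ (𝟙 Z - ε)) = f := by
  simp

end CategoryTheory.Limits

namespace CategoryTheory.Pretriangulated

variable {T : Type*} [Category T] [HasZeroObject T] [HasShift T ℤ] [Preadditive T]
    [∀ n : ℤ, (shiftFunctor T n).Additive] [Pretriangulated T]

lemma hom₃_comp_hom₃_eq_zero {Δ₁ Δ₂ Δ₃ : Triangle T} (hΔ₂ : Δ₂ ∈ distTriang T)
    (φ : Δ₁ ⟶ Δ₂) (ψ : Δ₂ ⟶ Δ₃) (hφ : φ.hom₁ = 0) (hψ : ψ.hom₂ = 0) :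
    φ.hom₃ ≫ ψ.hom₃ = 0 := by
  obtain ⟨z, hz⟩ := Triangle.coyoneda_exact₃ Δ₂ hΔ₂ φ.hom₃ (by simp [← φ.comm₃, hφ])
  rw [hz, Category.assoc, ψ.comm₂, hψ, zero_comp, comp_zero]

lemma hom₁_comp_hom₁_eq_zero {Δ₁ Δ₂ Δ₃ : Triangle T} (hΔ₂ : Δ₂ ∈ distTriang T)
    (φ : Δ₁ ⟶ Δ₂) (ψ : Δ₂ ⟶ Δ₃) (hφ : φ.hom₂ = 0) (hψ : ψ.hom₃ = 0) :
    φ.hom₁ ≫ ψ.hom₁ = 0 := by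
  apply (shiftFunctor T (1 : ℤ)).map_injective
  rw [Functor.map_comp, Functor.map_zero]
  exact hom₃_comp_hom₃_eq_zero (rot_of_distTriang _ hΔ₂)
    ((rotate T).map φ) ((rotate T).map ψ) hφ hψ

def endRingHom₂₃ (Δ : Triangle T) : End Δ →+* End Δ.obj₂ × End Δ.obj₃ where
  toFun φ := (φ.hom₂, φ.hom₃)
  map_one' := rfl
  map_mul' _ _ := rfl
  map_zero' := rfl
  map_add' _ _ := rfl

lemma exists_idempotent_of_hom₂_of_hom₃ {Δ : Triangle T} (hΔ : Δ ∈ distTriang T)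
    {p : Δ.obj₂ ⟶ Δ.obj₂} {ε : Δ.obj₃ ⟶ Δ.obj₃} (hp : p ≫ p = p) (hε : ε ≫ ε = ε)
    (comm : Δ.mor₂ ≫ ε = p ≫ Δ.mor₂) :
    ∃ Φ : Δ ⟶ Δ, Φ ≫ Φ = Φ ∧ Φ.hom₂ = p ∧ Φ.hom₃ = ε := by
  have hker : ∀ φ ∈ RingHom.ker (endRingHom₂₃ Δ), IsNilpotent φ := by
    intro φ hφ
    obtain ⟨hφ₂, hφ₃⟩ : φ.hom₂ = 0 ∧ φ.hom₃ = 0 := Prod.ext_iff.mp hφ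
    refine ⟨2, ?_⟩
    rw [pow_two, End.mul_def]
    refine Triangle.hom_ext _ _ ?_ ?_ ?_
    · exact hom₁_comp_hom₁_eq_zero hΔ φ φ hφ₂ hφ₃
    · simp [hφ₂]
    · simp [hφ₃]
  obtain ⟨a, ha₁, ha₃⟩ := complete_distinguished_triangle_morphism₁ Δ Δ hΔ hΔ p ε comm
  obtain ⟨Φ, hΦ, hΦp⟩ := exists_isIdempotentElem_eq_of_ker_isNilpotent (endRingHom₂₃ Δ) hker
    (p, ε) ⟨Triangle.homMk Δ Δ a p ε ha₁ comm ha₃, rfl⟩ (Prod.ext hp hε)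
  exact ⟨Φ, hΦ, (Prod.ext_iff.mp hΦp).1, (Prod.ext_iff.mp hΦp).2⟩

lemma exists_isSplitIdempotent_hom₁_hom₂ {Δ : Triangle T} (hΔ : Δ ∈ distTriang T)
    {α : Δ.obj₁ ⟶ Δ.obj₁} {p : Δ.obj₂ ⟶ Δ.obj₂} (hα : IsSplitIdempotent α)
    (hp : IsSplitIdempotent p) (comm : α ≫ Δ.mor₁ = Δ.mor₁ ≫ p) :
    ∃ e : Δ ⟶ Δ, IsSplitIdempotent e ∧ e.hom₁ = α ∧ e.hom₂ = p := by
  obtain ⟨Y₁, i₁, r₁, h₁, rfl⟩ := hα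
  obtain ⟨Y₂, i₂, r₂, h₂, rfl⟩ := hp
  rw [Category.assoc] at comm
  obtain ⟨Y₃, m₂, m₃, hΔY⟩ := distinguished_cocone_triangle (i₁ ≫ Δ.mor₁ ≫ r₂)
  have c₁ : (i₁ ≫ Δ.mor₁ ≫ r₂) ≫ i₂ = i₁ ≫ Δ.mor₁ := by
    simp only [Category.assoc, ← comm, reassoc_of% h₁]
  have c₂ : Δ.mor₁ ≫ r₂ = r₁ ≫ i₁ ≫ Δ.mor₁ ≫ r₂ := by
    rw [reassoc_of% comm, h₂, Category.comp_id]
  obtain ⟨i₃, hi₂, hi₃⟩ := complete_distinguished_triangle_morphism _ Δ hΔY hΔ i₁ i₂ c₁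
  obtain ⟨r₃, hr₂, hr₃⟩ := complete_distinguished_triangle_morphism Δ _ hΔ hΔY r₁ r₂ c₂
  let ι := Triangle.homMk _ _ i₁ i₂ i₃ c₁ hi₂ hi₃
  let r := Triangle.homMk _ _ r₁ r₂ r₃ c₂ hr₂ hr₃
  have hθ₁ : (ι ≫ r).hom₁ = 𝟙 _ := h₁
  have hθ₂ : (ι ≫ r).hom₂ = 𝟙 _ := h₂
  have hθ : IsIso (ι ≫ r) := by
    have : IsIso (ι ≫ r).hom₁ := by rw [hθ₁]; infer_instance
    have : IsIso (ι ≫ r).hom₂ := by rw [hθ₂]; infer_instance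
    exact Triangle.isIso_of_isIsos _ ‹_› ‹_› (isIso₃_of_isIso₁₂ _ hΔY hΔY ‹_› ‹_›)
  have hθinv₁ : (inv (ι ≫ r)).hom₁ = 𝟙 _ := by
    have h := congrArg TriangleMorphism.hom₁ (IsIso.hom_inv_id (ι ≫ r))
    rwa [comp_hom₁, hθ₁, Category.id_comp] at h
  have hθinv₂ : (inv (ι ≫ r)).hom₂ = 𝟙 _ := by
    have h := congrArg TriangleMorphism.hom₂ (IsIso.hom_inv_id (ι ≫ r))
    rwa [comp_hom₂, hθ₂, Category.id_comp] at h
  refine ⟨(r ≫ inv (ι ≫ r)) ≫ ι,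
    ⟨_, ι, r ≫ inv (ι ≫ r), (Category.assoc _ _ _).symm.trans (IsIso.hom_inv_id _), rfl⟩, ?_, ?_⟩
  · rw [comp_hom₁, comp_hom₁, hθinv₁, Category.comp_id]; rfl
  · rw [comp_hom₂, comp_hom₂, hθinv₂, Category.comp_id]; rfl

lemma isSplitIdempotent_of_hom₁_of_hom₂ {Δ : Triangle T} (hΔ : Δ ∈ distTriang T)
    {Φ : Δ ⟶ Δ} (hΦ : Φ ≫ Φ = Φ) (h₁ : IsSplitIdempotent Φ.hom₁)
    (h₂ : IsSplitIdempotent Φ.hom₂) : IsSplitIdempotent Φ := by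
  obtain ⟨e, he, he₁, he₂⟩ := exists_isSplitIdempotent_hom₁_hom₂ hΔ h₁ h₂ Φ.comm₁.symm
  have hd₁ : (e - Φ).hom₁ = 0 := by simp [he₁]
  have hd₂ : (e - Φ).hom₂ = 0 := by simp [he₂]
  refine he.of_sub_comp_self_eq_zero hΦ (Triangle.hom_ext _ _ ?_ ?_ ?_)
  · rw [comp_hom₁, hd₁, zero_comp]; rfl
  · rw [comp_hom₂, hd₂, zero_comp]; rfl
  · exact hom₃_comp_hom₃_eq_zero hΔ _ _ hd₁ hd₂

section Orthogonal

variable (P : ObjectProperty T)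

lemma rightOrthogonal_shift_biprod {X Y : T} {n : ℤ} (hX : P.rightOrthogonal (X⟦n⟧))
    (hY : P.rightOrthogonal (Y⟦n⟧)) : P.rightOrthogonal ((X ⊞ Y)⟦n⟧) :=
  P.rightOrthogonal.ext_of_isTriangulatedClosed₂ _
    (Triangle.shift_distinguished _ (binaryBiproductTriangle_distinguished X Y) n) hX hY

lemma rightOrthogonal_shift_one_obj₁ {Δ : Triangle T} (hΔ : Δ ∈ distTriang T)
    (hΔ₂ : P.rightOrthogonal (Δ.obj₂⟦(1 : ℤ)⟧))
    (happrox : ∀ Y, P Y → ∀ g : Y ⟶ Δ.obj₃, ∃ h, h ≫ Δ.mor₂ = g) :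
    P.rightOrthogonal (Δ.obj₁⟦(1 : ℤ)⟧) := by
  intro Y f hY
  have hf : f ≫ (-Δ.mor₁⟦(1 : ℤ)⟧') = 0 := by
    rw [Preadditive.comp_neg, hΔ₂ (f ≫ _) hY, neg_zero]
  obtain ⟨g, rfl⟩ := Triangle.coyoneda_exact₃ _ (rot_of_distTriang _ hΔ) f hf
  obtain ⟨h, rfl⟩ := happrox Y hY g
  change (h ≫ Δ.mor₂) ≫ Δ.mor₃ = 0
  rw [Category.assoc, comp_distTriang_mor_zero₂₃ _ hΔ, comp_zero]

lemma rightOrthogonal_shift_succ_obj₁ {Δ : Triangle T} (hΔ : Δ ∈ distTriang T) (n : ℤ)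
    (hΔ₂ : P.rightOrthogonal (Δ.obj₂⟦n + 1⟧)) (hΔ₃ : P.rightOrthogonal (Δ.obj₃⟦n⟧)) :
    P.rightOrthogonal (Δ.obj₁⟦n + 1⟧) :=
  P.rightOrthogonal.ext_of_isTriangulatedClosed₂ _
    (inv_rot_of_distTriang _ (Triangle.shift_distinguished _ hΔ (n + 1)))
    (P.rightOrthogonal.prop_of_iso ((shiftFunctorAdd' T (n + 1) (-1) n (by omega)).app _) hΔ₃)
    hΔ₂

theorem isSplitIdempotent_of_rightOrthogonal_shift (d : ℕ)
    (hP : ∀ X, P X ↔ ∀ i : ℤ, 0 < i → i < d → P.rightOrthogonal (X⟦i⟧))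
    (hsplit : ∀ X, P X → ∀ e : X ⟶ X, e ≫ e = e → IsSplitIdempotent e)
    (happrox : ∀ X, ∃ M, P M ∧ ∃ f : M ⟶ X, ∀ Y, P Y → ∀ g : Y ⟶ X, ∃ h, h ≫ f = g)
    (n : ℕ) {Z : T} (hZ : ∀ i : ℤ, 0 < i → i + n < d → P.rightOrthogonal (Z⟦i⟧))
    {ε : Z ⟶ Z} (hε : ε ≫ ε = ε) : IsSplitIdempotent ε := by
  induction n generalizing Z with
  | zero => exact hsplit Z ((hP Z).2 fun i hi hid => hZ i hi (by simpa using hid)) ε hε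
  | succ n ih =>
    obtain ⟨M, hM, f, hf⟩ := happrox Z
    obtain ⟨A, u, w, hΔ⟩ :=
      distinguished_cocone_triangle₁ (biprod.desc (f ≫ ε) (f ≫ (𝟙 Z - ε)))
    have hp : IsSplitIdempotent (biprod.fst ≫ biprod.inl : M ⊞ M ⟶ M ⊞ M) :=
      ⟨M, biprod.inl, biprod.fst, biprod.inl_fst, rfl⟩
    obtain ⟨Φ, hΦ, hΦ₂, hΦ₃⟩ :=
      exists_idempotent_of_hom₂_of_hom₃ hΔ hp.comp_self hε (biprod.desc_comp_idempotent f hε)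
    have hMM : ∀ i : ℤ, 0 < i → i < d → P.rightOrthogonal ((M ⊞ M)⟦i⟧) := fun i hi hid =>
      rightOrthogonal_shift_biprod P ((hP M).1 hM i hi hid) ((hP M).1 hM i hi hid)
    have hA : ∀ i : ℤ, 0 < i → i + n < d → P.rightOrthogonal (A⟦i⟧) := by
      intro i hi hid
      obtain ⟨k, rfl⟩ : ∃ k : ℤ, i = k + 1 := ⟨i - 1, by omega⟩
      obtain rfl | hk := eq_or_lt_of_le (show 0 ≤ k by omega)
      · refine rightOrthogonal_shift_one_obj₁ P hΔ (hMM 1 one_pos (by omega)) fun Y hY g => ?_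
        obtain ⟨h, rfl⟩ := hf Y hY g
        exact ⟨h ≫ biprod.lift (𝟙 M) (𝟙 M),
          (Category.assoc _ _ _).trans (congrArg (h ≫ ·) (biprod.lift_id_id_comp_desc f ε))⟩
      · exact rightOrthogonal_shift_succ_obj₁ P hΔ k (hMM _ hi (by omega))
          (hZ k hk (by push_cast at hid ⊢; omega))
    have hΦ₁ : Φ.hom₁ ≫ Φ.hom₁ = Φ.hom₁ := congrArg TriangleMorphism.hom₁ hΦ
    have hΦsplit := isSplitIdempotent_of_hom₁_of_hom₂ hΔ hΦ (ih hA hΦ₁) (hΦ₂ ▸ hp)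
    rw [← hΦ₃]
    exact hΦsplit.map Triangle.π₃

end Orthogonal

end CategoryTheory.Pretriangulated

/-- a `d`-cluster tilting subcategory `ℱ` of a triangulated category `T`
is idempotent complete if and only if `T` is idempotent complete. -/
theorem dCT_idempotentComplete_iff
    (T : Type u) [Category.{v} T] [HasZeroObject T] [HasShift T ℤ] [Preadditive T]
    [∀ n : ℤ, (shiftFunctor T n).Additive] [Pretriangulated T]
    (d : ℕ) (hd : 1 ≤ d) (ℱ : Set T)
    -- `ℱ` is functorially finite:
    (hcontra : ∀ X : T, ∃ M ∈ ℱ, ∃ f : M ⟶ X,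
      ∀ M' ∈ ℱ, ∀ g : M' ⟶ X, ∃ h : M' ⟶ M, h ≫ f = g)
    (hcov : ∀ X : T, ∃ M ∈ ℱ, ∃ f : X ⟶ M,
      ∀ M' ∈ ℱ, ∀ g : X ⟶ M', ∃ h : M ⟶ M', f ≫ h = g)
    -- `ℱ` is closed under direct summands (retracts):
    (hsummand : ∀ (X Y : T) (r : X ⟶ Y) (ι : Y ⟶ X), ι ≫ r = 𝟙 Y → X ∈ ℱ → Y ∈ ℱ)
    -- Hom-vanishing characterizations:
    (heq1 : ℱ = {X : T | ∀ i : ℤ, 0 < i → i < (d : ℤ) → ∀ M ∈ ℱ,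
      ∀ f : X ⟶ (shiftFunctor T i).obj M, f = 0})
    (heq2 : ℱ = {X : T | ∀ i : ℤ, 0 < i → i < (d : ℤ) → ∀ M ∈ ℱ,
      ∀ f : M ⟶ (shiftFunctor T i).obj X, f = 0}) :
    (∀ X : T, X ∈ ℱ → ∀ e : X ⟶ X, e ≫ e = e →
      ∃ Y : T, Y ∈ ℱ ∧ ∃ (r : X ⟶ Y) (ι : Y ⟶ X), e = r ≫ ι ∧ ι ≫ r = 𝟙 Y) ↔
    IsIdempotentComplete T := by
  constructor
  · intro hℱ
    have hvanish : ∀ X, X ∈ ℱ ↔ ∀ i : ℤ, 0 < i → i < d →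
        ObjectProperty.rightOrthogonal (· ∈ ℱ) (X⟦i⟧) := fun X =>
      (Set.ext_iff.mp heq2 X).trans <| forall₃_congr fun i _ _ =>
        ⟨fun h _ f hM => h _ hM f, fun h _ hM f => h f hM⟩
    have hsplit : ∀ X, X ∈ ℱ → ∀ e : X ⟶ X, e ≫ e = e → IsSplitIdempotent e := by
      intro X hX e he
      obtain ⟨Y, -, r, ι, h₁, h₂⟩ := hℱ X hX e he
      exact ⟨Y, ι, r, h₂, h₁.symm⟩
    rw [isIdempotentComplete_iff_forall_isSplitIdempotent]
    intro X e he
    exact isSplitIdempotent_of_rightOrthogonal_shift _ d hvanish hsplit hcontra (d - 1)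
      (fun i hi hid => by omega) he
  · intro hT X hX e he
    obtain ⟨Y, i, r, h₁, h₂⟩ := hT.idempotents_split X e he
    exact ⟨Y, hsummand X Y r i h₁ hX, r, i, h₂.symm, h₁⟩
end
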